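/- Define F(a,y) = (4·sinh((1/2)·arccosh((1 - 2y + 2a² - 2a²y² + y²)/(2a²(1-y²))))·√(1-y²) + 2ya)/(π·√(1-y²)) for 0 < a ≤ 1/√2 and 1 - 2a² < y ≤ √(1-a²). Then F(a,y) ≤ max(F(a, √(1-a²)), F evaluated at the boundary y = 1-2a²); i.e., the maximum of y ↦ F(a,y) on the closed interval [1-2a², √(1-a²)] is attained at an endpoint. -/

import Mathlib

open Real

/-- The inverse hyperbolic cosine on [1,∞). -/
noncomputable def arcosh (x : ℝ) : ℝ := Real.log (x + Real.sqrt (x^2 - 1))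

/-- The general density function of hyp-hor packings in the hyperbolic plane,
where `a` parametrizes the Coxeter tiling and `y` is the position of the
tangency point. -/
noncomputable def F (a y : ℝ) : ℝ :=
  (4 * Real.sinh ((1/2) * _root_.arcosh
      ((1 - 2*y + 2*a^2 - 2*a^2*y^2 + y^2) / (2 * a^2 * (1 - y^2)))) * Real.sqrt (1 - y^2)
    + 2 * y * a) / (π * Real.sqrt (1 - y^2))

/-!
For `-1 < y < 1` the half-angle formula `sinh (arcosh x / 2) = √((x - 1) / 2)` collapses the
density to `F a y = 2 / (a π) · (1 - b y) / √(1 - y²)` with `b = 1 - a²`. The derivative of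
`y ↦ (1 - b y) / √(1 - y²)` is `(y - b) / (1 - y²)^{3/2}`, so this function decreases up to
`y = b` and increases after it; on any closed subinterval of `(-1, 1)` its maximum is therefore
attained at an endpoint.
-/

open Set

theorem arcosh_eq_real_arcosh : _root_.arcosh = Real.arcosh := rfl

theorem sinh_half_arcosh {x : ℝ} (hx : 1 ≤ x) :
    sinh ((1 / 2) * _root_.arcosh x) = √((x - 1) / 2) := by
  set t := (1 / 2) * _root_.arcosh x
  have hcosh : cosh (2 * t) = x := by
    rw [show 2 * t = Real.arcosh x by simp [t, arcosh_eq_real_arcosh], cosh_arcosh hx]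
  have ht : 0 ≤ t := by
    have := arcosh_nonneg hx
    simp only [t, arcosh_eq_real_arcosh]
    positivity
  rw [cosh_two_mul, cosh_sq] at hcosh
  rw [show (x - 1) / 2 = sinh t ^ 2 by linarith, sqrt_sq (sinh_nonneg_iff.2 ht)]

noncomputable def densityProfile (b y : ℝ) : ℝ := (1 - b * y) / √(1 - y ^ 2)

theorem F_eq_mul_densityProfile {a y : ℝ} (ha : 0 < a) (hy : y ∈ Ioo (-1) 1) :
    F a y = 2 / (a * π) * densityProfile (1 - a ^ 2) y := by
  obtain ⟨hy₀, hy₁⟩ := hy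
  have h1y : 0 < 1 + y := by linarith
  have hy1 : 0 < 1 - y := by linarith
  have hyy : 0 < 1 - y ^ 2 := by nlinarith
  have harg : (1 - 2*y + 2*a^2 - 2*a^2*y^2 + y^2) / (2 * a^2 * (1 - y^2))
      = 1 + (1 - y) / (2 * a^2 * (1 + y)) := by
    field_simp
    ring
  have hsqrt_mul : √((1 + (1 - y) / (2 * a^2 * (1 + y)) - 1) / 2) * √(1 - y^2)
      = (1 - y) / (2 * a) := by
    rw [add_sub_cancel_left, ← sqrt_mul (by positivity),
      ← sqrt_sq (by positivity : 0 ≤ (1 - y) / (2 * a))]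
    congr 1
    field_simp
    ring
  rw [F, harg, sinh_half_arcosh (le_add_of_nonneg_right (by positivity)), mul_assoc, hsqrt_mul,
    densityProfile]
  have := sqrt_pos.2 hyy
  field_simp
  ring

theorem hasDerivAt_densityProfile (b : ℝ) {y : ℝ} (hy : y ∈ Ioo (-1) 1) :
    HasDerivAt (densityProfile b) ((y - b) / ((1 - y ^ 2) * √(1 - y ^ 2))) y := by
  obtain ⟨hy₀, hy₁⟩ := hy
  have hpos : 0 < 1 - y ^ 2 := by nlinarith
  have hsqrt : HasDerivAt (fun y => √(1 - y ^ 2)) (-(2 * y) / (2 * √(1 - y ^ 2))) y := by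
    simpa using ((hasDerivAt_id y).pow 2).const_sub 1 |>.sqrt hpos.ne'
  have hnum : HasDerivAt (fun y => 1 - b * y) (-b) y := by
    simpa using ((hasDerivAt_id y).const_mul b).const_sub 1
  refine (hnum.div hsqrt (sqrt_pos.2 hpos).ne').congr_deriv ?_
  have := sqrt_pos.2 hpos
  have hsq := sq_sqrt hpos.le
  field_simp
  linear_combination (y ^ 2 * b - y) * hsq

theorem continuousOn_densityProfile (b : ℝ) : ContinuousOn (densityProfile b) (Ioo (-1) 1) :=
  fun _ hy => (hasDerivAt_densityProfile b hy).continuousAt.continuousWithinAt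

theorem antitoneOn_densityProfile (b : ℝ) :
    AntitoneOn (densityProfile b) (Ioo (-1) 1 ∩ Iic b) := by
  refine antitoneOn_of_hasDerivWithinAt_nonpos ((convex_Ioo _ _).inter (convex_Iic _))
    ((continuousOn_densityProfile b).mono inter_subset_left)
    (fun y hy => (hasDerivAt_densityProfile b (interior_subset hy).1).hasDerivWithinAt) ?_
  intro y hy
  obtain ⟨⟨hy₀, hy₁⟩, hyb⟩ := interior_subset hy
  have : 0 < 1 - y ^ 2 := by nlinarith
  exact div_nonpos_of_nonpos_of_nonneg (sub_nonpos.2 hyb) (by positivity)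

theorem monotoneOn_densityProfile (b : ℝ) :
    MonotoneOn (densityProfile b) (Ioo (-1) 1 ∩ Ici b) := by
  refine monotoneOn_of_hasDerivWithinAt_nonneg ((convex_Ioo _ _).inter (convex_Ici _))
    ((continuousOn_densityProfile b).mono inter_subset_left)
    (fun y hy => (hasDerivAt_densityProfile b (interior_subset hy).1).hasDerivWithinAt) ?_
  intro y hy
  obtain ⟨⟨hy₀, hy₁⟩, hby⟩ := interior_subset hy
  have : 0 < 1 - y ^ 2 := by nlinarith
  exact div_nonneg (sub_nonneg.2 hby) (by positivity)

theorem densityProfile_le_max {b l r y : ℝ} (hl : -1 < l) (hr : r < 1) (hly : l ≤ y)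
    (hyr : y ≤ r) : densityProfile b y ≤ max (densityProfile b r) (densityProfile b l) := by
  have mem : ∀ {t}, l ≤ t → t ≤ r → t ∈ Ioo (-1) 1 :=
    fun h₁ h₂ => ⟨hl.trans_le h₁, h₂.trans_lt hr⟩
  rcases le_total y b with hyb | hby
  · exact le_max_of_le_right <| antitoneOn_densityProfile b
      ⟨mem le_rfl (hly.trans hyr), hly.trans hyb⟩ ⟨mem hly hyr, hyb⟩ hly
  · exact le_max_of_le_left <| monotoneOn_densityProfile b
      ⟨mem hly hyr, hby⟩ ⟨mem (hly.trans hyr) le_rfl, hby.trans hyr⟩ hyr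

/-- On the interval `[1 - 2a², √(1-a²)]` the maximum of `y ↦ F a y` is attained
at an endpoint. -/
theorem density_max_at_endpoints (a : ℝ) (h0 : 0 < a) (h1 : a ≤ 1 / Real.sqrt 2)
    (y : ℝ) (hy1 : 1 - 2*a^2 < y) (hy2 : y ≤ Real.sqrt (1 - a^2)) :
    F a y ≤ max (F a (Real.sqrt (1 - a^2))) (F a (1 - 2*a^2)) := by
  have ha : a ^ 2 ≤ 1 / 2 := by
    simpa [div_pow, sq_sqrt] using pow_le_pow_left₀ h0.le h1 2
  have hl : -1 < 1 - 2 * a ^ 2 := by linarith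
  have hr : √(1 - a ^ 2) < 1 := (sqrt_lt' one_pos).2 (by nlinarith)
  have hy : y ∈ Ioo (-1) 1 := ⟨hl.trans hy1, hy2.trans_lt hr⟩
  rw [F_eq_mul_densityProfile h0 hy, F_eq_mul_densityProfile h0 ⟨by linarith, hr⟩,
    F_eq_mul_densityProfile h0 ⟨hl, by nlinarith⟩, ← mul_max_of_nonneg _ _ (by positivity)]
  gcongr
  exact densityProfile_le_max hl hr hy1.le hy2
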